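/- Let c, m be real numbers with m ≠ 0 and define Υ(w₁,w₂,v₁,v₂) := (1 − w₁v₁)^{−c} · exp((m/2)·(w₁v₂² + 2w₂v₂ + w₂²v₁)/(1 − w₁v₁)) for real w₁, w₂, v₁, v₂ with w₁v₁ < 1. Then on this domain: (i) ∂Υ/∂w₁ − (1/(2m))·∂²Υ/∂w₂² = (c − 1/2)·(v₁/(1−w₁v₁))·Υ, and (ii) ∂Υ/∂v₁ − (1/(2m))·∂²Υ/∂v₂² = (c − 1/2)·(w₁/(1−w₁v₁))·Υ. Equivalently, the Berezin transforms of the subtracted elements are ⟨Pₜ − Pₓ²/(2m)⟩ = (c − 1/2)·v₁/(1−w₁v₁) and ⟨K − G²/(2m)⟩ = (c − 1/2)·w₁/(1−w₁v₁). -/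

import Mathlib

/-!
Write `Υ = D ^ (-c) * exp (Q / D)` with `D = 1 - w₁ v₁`, `Q` the quadratic numerator, and
put `ξ = (v₂ + w₂ v₁) / D`.
Then `∂Υ/∂w₂ = m ξ Υ`, hence `∂²Υ/∂w₂² = (m² ξ² + m v₁ / D) Υ`, while
`∂Υ/∂w₁ = (c v₁ / D + (m / 2) ξ²) Υ` because `∂(Q/D)/∂w₁ = (m/2) ξ²`. In the subtracted
combination the `ξ²` terms cancel, leaving `(c - 1/2) (v₁ / D) Υ`. The second identity is the
first one with `w` and `v` exchanged, since `Υ` is symmetric under that exchange.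
-/

/-- The Leibniz function of the Schrödinger algebra. -/
noncomputable def schrodingerLeibniz (c m w₁ w₂ v₁ v₂ : ℝ) : ℝ :=
  (1 - w₁ * v₁) ^ (-c) *
    Real.exp ((m / 2) * (w₁ * v₂ ^ 2 + 2 * w₂ * v₂ + w₂ ^ 2 * v₁) / (1 - w₁ * v₁))

theorem schrodingerLeibniz_comm (c m w₁ w₂ v₁ v₂ : ℝ) :
    schrodingerLeibniz c m w₁ w₂ v₁ v₂ = schrodingerLeibniz c m v₁ v₂ w₁ w₂ := by
  unfold schrodingerLeibniz
  ring_nf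

theorem hasDerivAt_schrodingerLeibniz_w₂ (c m w₁ w₂ v₁ v₂ : ℝ) :
    HasDerivAt (fun w => schrodingerLeibniz c m w₁ w v₁ v₂)
      (schrodingerLeibniz c m w₁ w₂ v₁ v₂ * (m * ((v₂ + w₂ * v₁) / (1 - w₁ * v₁)))) w₂ := by
  have hQ : HasDerivAt (fun w => m / 2 * (w₁ * v₂ ^ 2 + 2 * w * v₂ + w ^ 2 * v₁) / (1 - w₁ * v₁))
      (m * ((v₂ + w₂ * v₁) / (1 - w₁ * v₁))) w₂ :=
    (((((hasDerivAt_id w₂).const_mul 2).mul_const v₂).const_add (w₁ * v₂ ^ 2)).add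
      ((hasDerivAt_pow 2 w₂).mul_const v₁) |>.const_mul (m / 2) |>.div_const _).congr_deriv
      (by simp only [mul_one, Nat.cast_ofNat, Nat.add_one_sub_one, pow_one]; ring)
  exact (hQ.exp.const_mul _).congr_deriv (by unfold schrodingerLeibniz; ring)

theorem hasDerivAt_deriv_schrodingerLeibniz_w₂ (c m w₁ w₂ v₁ v₂ : ℝ) :
    HasDerivAt (deriv fun w => schrodingerLeibniz c m w₁ w v₁ v₂)
      (schrodingerLeibniz c m w₁ w₂ v₁ v₂ *
        (m ^ 2 * ((v₂ + w₂ * v₁) / (1 - w₁ * v₁)) ^ 2 + m * (v₁ / (1 - w₁ * v₁)))) w₂ := by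
  have hξ := ((((hasDerivAt_id w₂).mul_const v₁).const_add v₂).div_const (1 - w₁ * v₁)).const_mul m
  rw [funext fun w => (hasDerivAt_schrodingerLeibniz_w₂ c m w₁ w v₁ v₂).deriv]
  refine ((hasDerivAt_schrodingerLeibniz_w₂ c m w₁ w₂ v₁ v₂).mul hξ).congr_deriv ?_
  simp only [id]
  ring

theorem hasDerivAt_schrodingerLeibniz_w₁ (c m w₁ w₂ v₁ v₂ : ℝ) (h : w₁ * v₁ < 1) :
    HasDerivAt (fun w => schrodingerLeibniz c m w w₂ v₁ v₂)
      (schrodingerLeibniz c m w₁ w₂ v₁ v₂ *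
        (c * (v₁ / (1 - w₁ * v₁)) + m / 2 * ((v₂ + w₂ * v₁) / (1 - w₁ * v₁)) ^ 2)) w₁ := by
  have hD : 1 - w₁ * v₁ ≠ 0 := by linarith
  have hDw : HasDerivAt (fun w => 1 - w * v₁) (-v₁) w₁ :=
    (((hasDerivAt_id w₁).mul_const v₁).const_sub 1).congr_deriv (by simp only [one_mul])
  have hQ : HasDerivAt (fun w => m / 2 * (w * v₂ ^ 2 + 2 * w₂ * v₂ + w₂ ^ 2 * v₁))
      (m / 2 * v₂ ^ 2) w₁ :=
    ((((hasDerivAt_id w₁).mul_const (v₂ ^ 2)).add_const (2 * w₂ * v₂)).add_const (w₂ ^ 2 * v₁)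
      |>.const_mul (m / 2)).congr_deriv (by simp only [one_mul])
  refine ((hDw.rpow_const (p := -c) (Or.inl hD)).mul (hQ.div hDw hD).exp).congr_deriv ?_
  rw [Real.rpow_sub_one hD, Pi.div_apply]
  unfold schrodingerLeibniz
  field_simp
  ring

theorem deriv_sub_deriv_deriv_schrodingerLeibniz (c m w₁ w₂ v₁ v₂ : ℝ) (hm : m ≠ 0)
    (h : w₁ * v₁ < 1) :
    deriv (fun w => schrodingerLeibniz c m w w₂ v₁ v₂) w₁
        - 1 / (2 * m) * deriv (deriv fun w => schrodingerLeibniz c m w₁ w v₁ v₂) w₂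
      = (c - 1 / 2) * (v₁ / (1 - w₁ * v₁)) * schrodingerLeibniz c m w₁ w₂ v₁ v₂ := by
  rw [(hasDerivAt_schrodingerLeibniz_w₁ c m w₁ w₂ v₁ v₂ h).deriv,
    (hasDerivAt_deriv_schrodingerLeibniz_w₂ c m w₁ w₂ v₁ v₂).deriv]
  generalize (v₂ + w₂ * v₁) / (1 - w₁ * v₁) = ξ
  generalize v₁ / (1 - w₁ * v₁) = ρ
  field_simp
  ring

/-- Berezin transforms of the subtracted Schrödinger elements `Pₜ − Pₓ²/(2m)` and
`K − G²/(2m)`: on the domain `w₁v₁ < 1`,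
`∂Υ/∂w₁ − (1/(2m))∂²Υ/∂w₂² = (c − 1/2)(v₁/(1−w₁v₁))Υ` and
`∂Υ/∂v₁ − (1/(2m))∂²Υ/∂v₂² = (c − 1/2)(w₁/(1−w₁v₁))Υ`. -/
theorem schrodinger_subtracted_berezin (c m : ℝ) (hm : m ≠ 0)
    (w₁ w₂ v₁ v₂ : ℝ) (h : w₁ * v₁ < 1) :
    (deriv (fun w => schrodingerLeibniz c m w w₂ v₁ v₂) w₁
        - (1 / (2 * m)) *
          deriv (fun w => deriv (fun w' => schrodingerLeibniz c m w₁ w' v₁ v₂) w) w₂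
      = (c - 1 / 2) * (v₁ / (1 - w₁ * v₁)) * schrodingerLeibniz c m w₁ w₂ v₁ v₂) ∧
    (deriv (fun v => schrodingerLeibniz c m w₁ w₂ v v₂) v₁
        - (1 / (2 * m)) *
          deriv (fun v => deriv (fun v' => schrodingerLeibniz c m w₁ w₂ v₁ v') v) v₂
      = (c - 1 / 2) * (w₁ / (1 - w₁ * v₁)) * schrodingerLeibniz c m w₁ w₂ v₁ v₂) := by
  refine ⟨deriv_sub_deriv_deriv_schrodingerLeibniz c m w₁ w₂ v₁ v₂ hm h, ?_⟩
  simp only [schrodingerLeibniz_comm c m w₁ w₂, mul_comm w₁ v₁]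
  exact deriv_sub_deriv_deriv_schrodingerLeibniz c m v₁ v₂ w₁ w₂ hm (by rwa [mul_comm])
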